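/- The Narayana triangle, i.e., the matrix N with N(n,k) = N(n+1,k+1) = (1/(n+1))·C(n+1,k+1)·C(n+1,k) for n ≥ k ≥ 0, is an SDR-matrix of order m for every m ≥ 3. -/

import Mathlib

/-!
For `k ≤ n` the Narayana number equals `n! (n+1)! / (k! (k+1)! (n-k)! (n-k+1)!)`: a function of
the row `n`, times a function of the column `k`, times a function of the diagonal `n - k` (which
also accounts for the zeros above the diagonal). Star of David identities are multiplicative in
the matrix, and the two sides of each one meet the same rows, the same columns and the same
diagonals, so each of the three factors satisfies them on its own.
-/

/-- `A` is an SDR-matrix of order `m`: the generalized Star of David rule holds for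
all `2 ≤ p ≤ m-1` and `0 ≤ r ≤ p-1`. -/
def IsSDR (m : ℕ) (A : ℕ → ℕ → ℚ) : Prop :=
  ∀ n k p r : ℕ, 2 ≤ p → p ≤ m - 1 → r ≤ p - 1 →
    (∏ i ∈ Finset.range (r+1), A (n+i) (k+r-i)) *
      (∏ i ∈ Finset.range (p-r), A (n+p-i) (k+r+i+1)) =
    (∏ i ∈ Finset.range (r+1), A (n+p-i) (k+p-r+i)) *
      (∏ i ∈ Finset.range (p-r), A (n+i) (k+p-r-i-1))

open Finset Nat

theorem Finset.prod_range_congr {M : Type*} [CommMonoid M] {f g : ℕ → M} {n : ℕ}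
    (h : ∀ i < n, f i = g i) : ∏ i ∈ range n, f i = ∏ i ∈ range n, g i :=
  prod_congr rfl fun i hi => h i (mem_range.1 hi)

theorem IsSDR.mul {m : ℕ} {A B : ℕ → ℕ → ℚ} (hA : IsSDR m A) (hB : IsSDR m B) :
    IsSDR m fun x y => A x y * B x y := by
  intro n k p r hp hpm hr
  simp only [prod_mul_distrib]
  rw [mul_mul_mul_comm, hA n k p r hp hpm hr, hB n k p r hp hpm hr, mul_mul_mul_comm]

theorem isSDR_row (m : ℕ) (a : ℕ → ℚ) : IsSDR m fun x _ => a x := by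
  intro n k p r hp _ hr
  obtain ⟨s, rfl⟩ : ∃ s, p = r + s + 1 := ⟨p - r - 1, by omega⟩
  rw [show r + s + 1 - r = s + 1 by omega]
  calc _ = ∏ i ∈ range (r + 1 + (s + 1)), a (n + i) := by
        rw [prod_range_add _ (r + 1), ← prod_range_reflect (fun i => a (n + (r + 1 + i))) (s + 1)]
        congr 1
        exact prod_range_congr fun i _ => congrArg a (by omega)
    _ = _ := by
        rw [add_comm, prod_range_add _ (s + 1), mul_comm,
          ← prod_range_reflect (fun i => a (n + (s + 1 + i))) (r + 1)]
        congr 1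
        exact prod_range_congr fun i _ => congrArg a (by omega)

theorem isSDR_col (m : ℕ) (b : ℕ → ℚ) : IsSDR m fun _ y => b y := by
  intro n k p r hp _ hr
  obtain ⟨s, rfl⟩ : ∃ s, p = r + s + 1 := ⟨p - r - 1, by omega⟩
  rw [show r + s + 1 - r = s + 1 by omega]
  calc _ = ∏ i ∈ range (r + 1 + (s + 1)), b (k + i) := by
        rw [prod_range_add _ (r + 1), ← prod_range_reflect (fun i => b (k + i)) (r + 1)]
        congr 1 <;> exact prod_range_congr fun i _ => congrArg b (by omega)
    _ = _ := by
        rw [add_comm, prod_range_add _ (s + 1), mul_comm,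
          ← prod_range_reflect (fun i => b (k + i)) (s + 1)]
        congr 1 <;> exact prod_range_congr fun i _ => congrArg b (by omega)

theorem isSDR_diag (m : ℕ) (c : ℤ → ℚ) : IsSDR m fun x y => c (x - y) := by
  intro n k p r hp _ hr
  obtain ⟨s, rfl⟩ : ∃ s, p = r + s + 1 := ⟨p - r - 1, by omega⟩
  rw [show r + s + 1 - r = s + 1 by omega]
  -- The two products over `range (r + 1)` both run through the diagonals
  -- `n - k - r, n - k - r + 2, …, n - k + r`, in opposite orders; likewise for `range (s + 1)`.
  congr 1 <;> rw [← prod_range_reflect] <;> exact prod_range_congr fun i _ => congrArg c (by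
    rw [sub_eq_sub_iff_add_eq_add]; norm_cast; omega)

def factMulFactSucc (n : ℕ) : ℚ := n ! * (n + 1)!

def narayanaDiagonalFactor (d : ℤ) : ℚ := if 0 ≤ d then (factMulFactSucc d.toNat)⁻¹ else 0

theorem narayana_eq (x y : ℕ) :
    (1 / (x + 1) : ℚ) * (x + 1).choose (y + 1) * (x + 1).choose y =
      factMulFactSucc x * (factMulFactSucc y)⁻¹ * narayanaDiagonalFactor (x - y) := by
  unfold narayanaDiagonalFactor
  rcases le_or_gt y x with hyx | hxy
  · obtain ⟨d, rfl⟩ := Nat.exists_eq_add_of_le hyx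
    rw [if_pos (by omega), show ((y + d : ℕ) - y : ℤ).toNat = d by omega,
      show y + d + 1 = y + 1 + d by ring, cast_add_choose,
      show y + 1 + d = y + (d + 1) by ring, cast_add_choose, ← add_assoc]
    simp only [factMulFactSucc, factorial_succ]
    push_cast
    field_simp
  · rw [choose_eq_zero_of_lt (by omega : x + 1 < y + 1), if_neg (by omega)]
    simp

theorem narayana_triangle_isSDR_general (m : ℕ) :
    IsSDR m (fun n k =>
      (1 / (n+1) : ℚ) * Nat.choose (n+1) (k+1) * Nat.choose (n+1) k) := by
  simp only [narayana_eq]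
  exact ((isSDR_row m factMulFactSucc).mul (isSDR_col m fun y => (factMulFactSucc y)⁻¹)).mul
    (isSDR_diag m narayanaDiagonalFactor)

theorem narayana_triangle_isSDR (m : ℕ) (hm : 3 ≤ m) :
    IsSDR m (fun n k =>
      (1 / (n+1) : ℚ) * Nat.choose (n+1) (k+1) * Nat.choose (n+1) k) :=
  narayana_triangle_isSDR_general m
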